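/- Let G be a finite simple graph with Ore-degree θ(G) ≤ 7 such that G admits no strong edge-coloring with 13 colors but every proper subgraph of G admits a strong edge-coloring with 13 colors. Then G contains no cycle of length 3; that is, G is triangle-free. -/

import Mathlib

/-- Two edges `e` and `f` of a graph `G` *see* each other if they are contained in a
common path or cycle of length at most three, i.e. they share an endpoint or some
endpoint of `e` is adjacent to some endpoint of `f`. -/
def SimpleGraph.Sees {V : Type*} (G : SimpleGraph V) (e f : Sym2 V) : Prop :=
  ∃ u ∈ e, ∃ v ∈ f, u = v ∨ G.Adj u v

/-- `c` is a strong edge-coloring of `G`: edges that see each other get distinct colors. -/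
def SimpleGraph.IsStrongEdgeColoring {V α : Type*} (G : SimpleGraph V) (c : Sym2 V → α) : Prop :=
  ∀ e ∈ G.edgeSet, ∀ f ∈ G.edgeSet, e ≠ f → G.Sees e f → c e ≠ c f

/-- `G` admits a strong edge-coloring with `n` colors. -/
def SimpleGraph.HasStrongColoring {V : Type*} (G : SimpleGraph V) (n : ℕ) : Prop :=
  ∃ c : Sym2 V → Fin n, G.IsStrongEdgeColoring c

/-!
Suppose `G` contains a triangle `uvw`. Adding the Ore bounds along its three sides gives
`2 (d u + d v + d w) ≤ 21`, so some side, say `uv`, has `d u + d v ≤ 6`. By minimality, the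
spanning subgraph of the edges avoiding `u` and `v` is strongly 13-edge-colorable, and this colors
every edge of `G` avoiding `u` and `v`. The remaining edges are colored greedily: first the at
most two spokes (edges at `u` or `v` leaving the triangle), then `uw`, `vw` and finally `uv`.
An edge avoiding `u` and `v` that sees `s(p, m)` has an endpoint in `N(p) ∪ N(m) \ {u, v, m}`,
and the Ore condition bounds how many such edges each of these vertices carries; at every
step fewer than 13 colored edges are seen, so `G` would be strongly 13-edge-colorable.
-/

open Finset

theorem Finset.sum_union_le {ι M : Type*} [DecidableEq ι] [AddCommMonoid M] [PartialOrder M]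
    [CanonicallyOrderedAdd M] (s t : Finset ι) (f : ι → M) :
    ∑ i ∈ s ∪ t, f i ≤ ∑ i ∈ s, f i + ∑ i ∈ t, f i :=
  le_self_add.trans_eq Finset.sum_union_inter

namespace SimpleGraph

variable {V : Type*} {G : SimpleGraph V}

theorem Sees.symm {e f : Sym2 V} (h : G.Sees e f) : G.Sees f e := by
  obtain ⟨a, ha, b, hb, hab⟩ := h
  exact ⟨b, hb, a, ha, hab.imp Eq.symm Adj.symm⟩

variable (G)

def IsStrongEdgeColoringOn {α : Type*} (c : Sym2 V → α) (C : Finset (Sym2 V)) : Prop :=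
  ∀ e ∈ C, ∀ f ∈ C, e ≠ f → G.Sees e f → c e ≠ c f

open Classical in
noncomputable def seenIn (C : Finset (Sym2 V)) (f : Sym2 V) : Finset (Sym2 V) :=
  C.filter fun g => g ≠ f ∧ G.Sees f g

def avoidingSubgraph (B : Finset V) : G.Subgraph where
  verts := Set.univ
  Adj a b := G.Adj a b ∧ a ∉ B ∧ b ∉ B
  adj_sub h := h.1
  edge_vert _ := Set.mem_univ _
  symm := ⟨fun _ _ h => ⟨h.1.symm, h.2.2, h.2.1⟩⟩

variable {G}

theorem mem_seenIn {C : Finset (Sym2 V)} {f g : Sym2 V} :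
    g ∈ G.seenIn C f ↔ g ∈ C ∧ g ≠ f ∧ G.Sees f g := by
  simp [seenIn]

section Greedy

variable [DecidableEq V]

variable (G) in
theorem card_seenIn_union_le (C F : Finset (Sym2 V)) (f : Sym2 V) :
    #(G.seenIn (C ∪ F) f) ≤ #(G.seenIn C f) + #F :=
  calc #(G.seenIn (C ∪ F) f) ≤ #(G.seenIn C f ∪ F) := card_le_card fun g hg => by
        simp only [mem_union, mem_seenIn] at hg ⊢; tauto
    _ ≤ _ := card_union_le _ _

variable (G) in
theorem card_seenIn_insert_le (C : Finset (Sym2 V)) (g f : Sym2 V) :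
    #(G.seenIn (insert g C) f) ≤ #(G.seenIn C f) + 1 := by
  simpa [union_comm] using card_seenIn_union_le G C {g} f

variable {α : Type*} [Fintype α] {c : Sym2 V → α} {C : Finset (Sym2 V)}

theorem IsStrongEdgeColoringOn.exists_insert (hc : G.IsStrongEdgeColoringOn c C) {f : Sym2 V}
    (hf : #(G.seenIn C f) < Fintype.card α) :
    ∃ c' : Sym2 V → α, G.IsStrongEdgeColoringOn c' (insert f C) := by
  classical
  obtain ⟨k, -, hk⟩ := exists_mem_notMem_of_card_lt_card
    (s := (G.seenIn C f).image c) (t := univ) (card_image_le.trans_lt hf)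
  have hfresh : ∀ g ∈ C, g ≠ f → G.Sees f g → c g ≠ k := fun g hg hgf hs h =>
    hk (mem_image.2 ⟨g, mem_seenIn.2 ⟨hg, hgf, hs⟩, h⟩)
  refine ⟨Function.update c f k, fun e he g hg hne hs => ?_⟩
  rcases eq_or_ne e f with rfl | hef
  · have hge : g ≠ e := hne.symm
    rw [Function.update_self, Function.update_of_ne hge]
    exact (hfresh g (mem_of_mem_insert_of_ne hg hge) hge hs).symm
  rw [Function.update_of_ne hef]
  rcases eq_or_ne g f with rfl | hgf
  · rw [Function.update_self]
    exact hfresh e (mem_of_mem_insert_of_ne he hef) hef hs.symm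
  · rw [Function.update_of_ne hgf]
    exact hc e (mem_of_mem_insert_of_ne he hef) g (mem_of_mem_insert_of_ne hg hgf) hne hs

theorem IsStrongEdgeColoringOn.exists_union (hc : G.IsStrongEdgeColoringOn c C)
    (F : Finset (Sym2 V)) (hF : ∀ f ∈ F, #(G.seenIn C f) + #F ≤ Fintype.card α) :
    ∃ c' : Sym2 V → α, G.IsStrongEdgeColoringOn c' (C ∪ F) := by
  induction F using Finset.induction_on with
  | empty => exact ⟨c, by simpa using hc⟩
  | insert f F hfF ih =>
    rw [card_insert_of_notMem hfF] at hF
    obtain ⟨c₁, hc₁⟩ := ih fun g hg => by have := hF g (mem_insert_of_mem hg); omega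
    have hf := hF f (mem_insert_self f F)
    have hseen := card_seenIn_union_le G C F f
    obtain ⟨c₂, hc₂⟩ := hc₁.exists_insert (f := f) (by omega)
    exact ⟨c₂, by rwa [union_insert]⟩

end Greedy

theorem avoidingSubgraph_ne_top {B : Finset V} {u v : V} (hu : u ∈ B) (huv : G.Adj u v) :
    G.avoidingSubgraph B ≠ ⊤ := fun h =>
  (show (G.avoidingSubgraph B).Adj u v from h ▸ huv).2.1 hu

section Avoiding

variable [Fintype V] [DecidableEq V] [DecidableRel G.Adj] {B : Finset V}

variable (G) in
def edgesAvoiding (B : Finset V) : Finset (Sym2 V) :=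
  G.edgeFinset.filter fun e => ∀ z ∈ B, z ∉ e

variable (G) in
def degreeAvoiding (B : Finset V) (z : V) : ℕ := #(G.neighborFinset z \ B)

theorem mem_edgesAvoiding {e : Sym2 V} :
    e ∈ G.edgesAvoiding B ↔ e ∈ G.edgeSet ∧ ∀ z ∈ B, z ∉ e := by
  simp [edgesAvoiding]

theorem exists_isStrongEdgeColoringOn_edgesAvoiding {n : ℕ}
    (h : (G.avoidingSubgraph B).coe.HasStrongColoring n) :
    ∃ c : Sym2 V → Fin n, G.IsStrongEdgeColoringOn c (G.edgesAvoiding B) := by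
  obtain ⟨c, hc⟩ := h
  let ι : V → (G.avoidingSubgraph B).verts := fun z => ⟨z, Set.mem_univ z⟩
  have hι : Function.Injective ι := fun _ _ h => congrArg Subtype.val h
  have hedge : ∀ e ∈ G.edgesAvoiding B, e.map ι ∈ (G.avoidingSubgraph B).coe.edgeSet := by
    intro e he
    induction e using Sym2.ind with
    | _ a b =>
      obtain ⟨hab, hB⟩ := mem_edgesAvoiding.1 he
      exact ⟨hab, fun ha => hB a ha (Sym2.mem_mk_left a b),
        fun hb => hB b hb (Sym2.mem_mk_right a b)⟩
  refine ⟨fun e => c (e.map ι), fun e he f hf hne hs => ?_⟩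
  refine hc _ (hedge e he) _ (hedge f hf) ((Sym2.map.injective hι).ne hne) ?_
  obtain ⟨a, ha, b, hb, hab⟩ := hs
  refine ⟨ι a, Sym2.mem_map.2 ⟨a, ha, rfl⟩, ι b, Sym2.mem_map.2 ⟨b, hb, rfl⟩, ?_⟩
  exact hab.imp (congrArg ι) fun h =>
    ⟨h, fun haB => (mem_edgesAvoiding.1 he).2 a haB ha,
      fun hbB => (mem_edgesAvoiding.1 hf).2 b hbB hb⟩

theorem mem_image_of_mem_edgesAvoiding {g : Sym2 V} (hg : g ∈ G.edgesAvoiding B) {z : V}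
    (hz : z ∈ g) : g ∈ (G.neighborFinset z \ B).image (s(z, ·)) := by
  obtain ⟨hgE, hgB⟩ := mem_edgesAvoiding.1 hg
  obtain ⟨r, rfl⟩ := Sym2.mem_iff_exists.1 hz
  exact mem_image.2 ⟨r, mem_sdiff.2 ⟨(mem_neighborFinset _ _ _).2 hgE,
    fun hr => hgB r hr (Sym2.mem_mk_right z r)⟩, rfl⟩

theorem card_seenIn_edgesAvoiding_le {p : V} (hp : p ∈ B) (m : V) :
    #(G.seenIn (G.edgesAvoiding B) s(p, m)) ≤
      ∑ z ∈ (G.neighborFinset p ∪ G.neighborFinset m) \ insert m B, G.degreeAvoiding B z := by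
  set T := (G.neighborFinset p ∪ G.neighborFinset m) \ insert m B
  have hcover : ∀ g ∈ G.seenIn (G.edgesAvoiding B) s(p, m), ∃ z ∈ T, z ∈ g := by
    intro g hg
    obtain ⟨hgS, -, a, ha, r, hr, har⟩ := mem_seenIn.1 hg
    obtain ⟨hgE, hgB⟩ := mem_edgesAvoiding.1 hgS
    obtain ⟨r', rfl⟩ := Sym2.mem_iff_exists.1 hr
    have hrB : r ∉ B := fun h => hgB r h (Sym2.mem_mk_left r r')
    have hr'B : r' ∉ B := fun h => hgB r' h (Sym2.mem_mk_right r r')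
    by_cases hrm : r = m
    · -- an edge at `m` is charged to its other endpoint
      subst hrm
      refine ⟨r', ?_, Sym2.mem_mk_right r r'⟩
      simp only [T, mem_sdiff, mem_union, mem_insert, mem_neighborFinset]
      exact ⟨Or.inr hgE, by rintro (h | h); exacts [G.irrefl (h ▸ hgE), hr'B h]⟩
    · refine ⟨r, ?_, Sym2.mem_mk_left r r'⟩
      simp only [T, mem_sdiff, mem_union, mem_insert, mem_neighborFinset]
      refine ⟨?_, by rintro (h | h); exacts [hrm h, hrB h]⟩
      rcases Sym2.mem_iff.1 ha with rfl | rfl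
      · exact Or.inl (har.resolve_left fun h => hrB (h ▸ hp))
      · exact Or.inr (har.resolve_left fun h => hrm h.symm)
  calc #(G.seenIn (G.edgesAvoiding B) s(p, m))
      ≤ #(T.biUnion fun z => (G.neighborFinset z \ B).image (s(z, ·))) := by
        refine card_le_card fun g hg => ?_
        obtain ⟨z, hzT, hzg⟩ := hcover g hg
        exact mem_biUnion.2 ⟨z, hzT, mem_image_of_mem_edgesAvoiding (mem_seenIn.1 hg).1 hzg⟩
    _ ≤ ∑ z ∈ T, #((G.neighborFinset z \ B).image (s(z, ·))) := card_biUnion_le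
    _ ≤ ∑ z ∈ T, G.degreeAvoiding B z := sum_le_sum fun z _ => card_image_le

theorem degreeAvoiding_add_card_inter (z : V) :
    G.degreeAvoiding B z + #(G.neighborFinset z ∩ B) = G.degree z := by
  rw [degreeAvoiding, card_sdiff_add_card_inter, card_neighborFinset_eq_degree]

theorem degreeAvoiding_add_one_le {z p : V} (hp : p ∈ B) (hzp : G.Adj z p) :
    G.degreeAvoiding B z + 1 ≤ G.degree z := by
  have : 1 ≤ #(G.neighborFinset z ∩ B) :=
    card_pos.2 ⟨p, mem_inter.2 ⟨(mem_neighborFinset _ _ _).2 hzp, hp⟩⟩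
  have := degreeAvoiding_add_card_inter (G := G) (B := B) z
  omega

theorem degreeAvoiding_add_two_le {z u v : V} (hu : u ∈ B) (hv : v ∈ B) (huv : u ≠ v)
    (hzu : G.Adj z u) (hzv : G.Adj z v) : G.degreeAvoiding B z + 2 ≤ G.degree z := by
  have : #{u, v} ≤ #(G.neighborFinset z ∩ B) := card_le_card <| by
    simp [insert_subset_iff, hu, hv, hzu, hzv]
  rw [card_pair huv] at this
  have := degreeAvoiding_add_card_inter (G := G) (B := B) z
  omega

variable (hore : ∀ a b : V, G.Adj a b → G.degree a + G.degree b ≤ 7)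
include hore

theorem sum_degreeAvoiding_sdiff_le {m : V} {t : Finset V} (ht : t ⊆ G.neighborFinset m) :
    ∑ z ∈ G.neighborFinset m \ t, G.degreeAvoiding B z ≤
      (G.degree m - #t) * (7 - G.degree m) := by
  rw [← card_neighborFinset_eq_degree, ← card_sdiff_of_subset ht, ← smul_eq_mul]
  refine sum_le_card_nsmul _ _ _ fun z hz => ?_
  have hmz : G.Adj m z := (mem_neighborFinset _ _ _).1 (mem_sdiff.1 hz).1
  have := hore m z hmz
  have := degreeAvoiding_add_card_inter (G := G) (B := B) z
  rw [card_neighborFinset_eq_degree]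
  omega

theorem sum_degreeAvoiding_sdiff_le_of_mem {p : V} (hp : p ∈ B) {t : Finset V}
    (ht : t ⊆ G.neighborFinset p) :
    ∑ z ∈ G.neighborFinset p \ t, G.degreeAvoiding B z ≤
      (G.degree p - #t) * (6 - G.degree p) := by
  rw [← card_neighborFinset_eq_degree, ← card_sdiff_of_subset ht, ← smul_eq_mul]
  refine sum_le_card_nsmul _ _ _ fun z hz => ?_
  have hpz : G.Adj p z := (mem_neighborFinset _ _ _).1 (mem_sdiff.1 hz).1
  have := hore p z hpz
  have := degreeAvoiding_add_one_le hp hpz.symm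
  rw [card_neighborFinset_eq_degree]
  omega

end Avoiding

section Triangle

variable [Fintype V] [DecidableEq V] [DecidableRel G.Adj]

variable (G) in
def spokes (u v w : V) : Finset (Sym2 V) :=
  (G.neighborFinset u \ {v, w}).image (s(u, ·)) ∪ (G.neighborFinset v \ {u, w}).image (s(v, ·))

variable {u v w : V} (huv : G.Adj u v) (huw : G.Adj u w) (hvw : G.Adj v w)
include huv huw hvw

theorem card_spokes_add_four_le : #(G.spokes u v w) + 4 ≤ G.degree u + G.degree v := by
  have hu := card_sdiff_add_card_eq_card (s := {v, w}) (t := G.neighborFinset u)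
    (by simp [insert_subset_iff, huv, huw])
  have hv := card_sdiff_add_card_eq_card (s := {u, w}) (t := G.neighborFinset v)
    (by simp [insert_subset_iff, huv.symm, hvw])
  rw [card_pair hvw.ne, card_neighborFinset_eq_degree] at hu
  rw [card_pair huw.ne, card_neighborFinset_eq_degree] at hv
  have := (card_union_le _ _).trans (add_le_add (card_image_le (s := G.neighborFinset u \ {v, w})
    (f := (s(u, ·)))) (card_image_le (s := G.neighborFinset v \ {u, w}) (f := (s(v, ·)))))
  rw [spokes]
  omega

theorem mem_sides_or_spokes_or_edgesAvoiding {e : Sym2 V} (he : e ∈ G.edgeSet) :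
    e ∈ insert s(u, v) (insert s(v, w) (insert s(u, w)
      (G.edgesAvoiding {u, v} ∪ G.spokes u v w))) := by
  by_cases hB : ∀ z ∈ ({u, v} : Finset V), z ∉ e
  · simp [mem_edgesAvoiding.2 ⟨he, hB⟩]
  push Not at hB
  obtain ⟨p, hp, hpe⟩ := hB
  obtain ⟨r, rfl⟩ := Sym2.mem_iff_exists.1 hpe
  have hpr : G.Adj p r := he
  simp only [spokes, mem_insert, mem_singleton, mem_union, mem_image, mem_sdiff,
    mem_neighborFinset] at hp ⊢
  rcases hp with rfl | rfl
  · by_cases hrv : r = v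
    · simp [hrv]
    by_cases hrw : r = w
    · simp [hrw]
    exact Or.inr <| Or.inr <| Or.inr <| Or.inr <| Or.inl ⟨r, ⟨hpr, by tauto⟩, rfl⟩
  · by_cases hru : r = u
    · simp [hru, Sym2.eq_swap]
    by_cases hrw : r = w
    · simp [hrw]
    exact Or.inr <| Or.inr <| Or.inr <| Or.inr <| Or.inr ⟨r, ⟨hpr, by tauto⟩, rfl⟩

variable (hore : ∀ a b : V, G.Adj a b → G.degree a + G.degree b ≤ 7)
include hore

theorem card_seenIn_spoke_le {x : V} (hux : G.Adj u x) (hxv : x ≠ v) (hxw : x ≠ w) :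
    #(G.seenIn (G.edgesAvoiding {u, v}) s(u, x)) ≤ 11 := by
  have hcover : (G.neighborFinset u ∪ G.neighborFinset x) \ insert x {u, v} ⊆
      ({w} ∪ (G.neighborFinset u \ {v, w, x})) ∪ (G.neighborFinset x \ {u}) := by
    intro z
    simp only [mem_sdiff, mem_union, mem_insert, mem_singleton]
    tauto
  have hload := (card_seenIn_edgesAvoiding_le (mem_insert_self u {v}) x).trans <|
    (sum_le_sum_of_subset hcover).trans <|
      (sum_union_le _ _ _).trans (add_le_add_left (sum_union_le _ _ _) _)
  have hvwx : ({v, w, x} : Finset V) ⊆ G.neighborFinset u := by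
    simp [insert_subset_iff, huv, huw, hux]
  have hcard : #({v, w, x} : Finset V) = 3 := by
    rw [card_insert_of_notMem (by simp [hvw.ne, hxv.symm]), card_pair hxw.symm]
  have hw := degreeAvoiding_add_two_le (B := {u, v}) (by simp) (by simp) huv.ne huw.symm hvw.symm
  have hA := sum_degreeAvoiding_sdiff_le_of_mem hore (mem_insert_self u {v}) hvwx
  have hR := sum_degreeAvoiding_sdiff_le (B := {u, v}) hore (t := {u}) (by simpa using hux.symm)
  have hdu := card_le_card hvwx
  rw [sum_singleton] at hload
  rw [hcard] at hA hdu
  rw [card_singleton] at hR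
  rw [card_neighborFinset_eq_degree] at hdu
  have := hore u w huw
  have := hore u x hux
  have ha : G.degree u ≤ 7 := by omega
  have hb : G.degree x ≤ 7 := by omega
  generalize G.degree u = a at *
  generalize G.degree x = b at *
  interval_cases a <;> interval_cases b <;> omega

theorem card_seenIn_side_le (hdeg : G.degree u + G.degree v ≤ 6) :
    #(G.seenIn (G.edgesAvoiding {u, v}) s(u, w)) + (G.degree u - 2) + (G.degree v - 2) ≤
      11 := by
  have hcover : (G.neighborFinset u ∪ G.neighborFinset w) \ insert w {u, v} ⊆
      (G.neighborFinset u \ {v, w}) ∪ (G.neighborFinset w \ {u, v}) := by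
    intro z
    simp only [mem_sdiff, mem_union, mem_insert, mem_singleton]
    tauto
  have hload := (card_seenIn_edgesAvoiding_le (mem_insert_self u {v}) w).trans <|
    (sum_le_sum_of_subset hcover).trans (sum_union_le _ _ _)
  have hA := sum_degreeAvoiding_sdiff_le_of_mem hore (mem_insert_self u {v}) (t := {v, w})
    (by simp [insert_subset_iff, huv, huw])
  have hR := sum_degreeAvoiding_sdiff_le (B := {u, v}) hore (m := w) (t := {u, v})
    (by simp [insert_subset_iff, huw.symm, hvw.symm])
  rw [card_pair hvw.ne] at hA
  rw [card_pair huv.ne] at hR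
  have := hore u w huw
  have := hore v w hvw
  have ha : G.degree u ≤ 7 := by omega
  have hc : G.degree w ≤ 7 := by omega
  generalize G.degree u = a at *
  generalize G.degree w = c at *
  interval_cases a <;> interval_cases c <;> omega

theorem card_seenIn_base_le (hdeg : G.degree u + G.degree v ≤ 6) :
    #(G.seenIn (G.edgesAvoiding {u, v}) s(u, v)) + (G.degree u - 2) + (G.degree v - 2) ≤
      10 := by
  have hcover : (G.neighborFinset u ∪ G.neighborFinset v) \ insert v {u, v} ⊆
      ({w} ∪ (G.neighborFinset u \ {v, w})) ∪ (G.neighborFinset v \ {u, w}) := by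
    intro z
    simp only [mem_sdiff, mem_union, mem_insert, mem_singleton]
    tauto
  have hload := (card_seenIn_edgesAvoiding_le (mem_insert_self u {v}) v).trans <|
    (sum_le_sum_of_subset hcover).trans <|
      (sum_union_le _ _ _).trans (add_le_add_left (sum_union_le _ _ _) _)
  have hw := degreeAvoiding_add_two_le (B := {u, v}) (by simp) (by simp) huv.ne huw.symm hvw.symm
  have hA := sum_degreeAvoiding_sdiff_le_of_mem hore (mem_insert_self u {v}) (t := {v, w})
    (by simp [insert_subset_iff, huv, huw])
  have hB := sum_degreeAvoiding_sdiff_le_of_mem hore (B := {u, v}) (p := v) (by simp)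
    (t := {u, w}) (by simp [insert_subset_iff, huv.symm, hvw])
  rw [sum_singleton] at hload
  rw [card_pair hvw.ne] at hA
  rw [card_pair huw.ne] at hB
  have := hore u w huw
  have := hore v w hvw
  have ha : G.degree u ≤ 6 := by omega
  have hb : G.degree v ≤ 6 := by omega
  generalize G.degree u = a at *
  generalize G.degree v = b at *
  interval_cases a <;> interval_cases b <;> omega

theorem card_seenIn_le_of_mem_spokes {f : Sym2 V} (hf : f ∈ G.spokes u v w) :
    #(G.seenIn (G.edgesAvoiding {u, v}) f) ≤ 11 := by
  simp only [spokes, mem_union, mem_image, mem_sdiff, mem_insert, mem_singleton,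
    mem_neighborFinset, not_or] at hf
  rcases hf with ⟨x, ⟨hux, hxv, hxw⟩, rfl⟩ | ⟨y, ⟨hvy, hyu, hyw⟩, rfl⟩
  · exact card_seenIn_spoke_le huv huw hvw hore hux hxv hxw
  · rw [pair_comm]
    exact card_seenIn_spoke_le huv.symm hvw huw hore hvy hyu hyw

theorem hasStrongColoring_of_triangle (hdeg : G.degree u + G.degree v ≤ 6)
    {c₀ : Sym2 V → Fin 13} (hc₀ : G.IsStrongEdgeColoringOn c₀ (G.edgesAvoiding {u, v})) :
    G.HasStrongColoring 13 := by
  have hP := card_spokes_add_four_le huv huw hvw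
  have hside_u := card_seenIn_side_le huv huw hvw hore hdeg
  have hside_v := card_seenIn_side_le huv.symm hvw huw hore (by omega)
  have hbase := card_seenIn_base_le huv huw hvw hore hdeg
  rw [pair_comm] at hside_v
  set S := G.edgesAvoiding {u, v}
  set P := G.spokes u v w
  have hspokes : ∀ f ∈ P, #(G.seenIn S f) ≤ 11 := fun f hf =>
    card_seenIn_le_of_mem_spokes huv huw hvw hore hf
  obtain ⟨c₁, hc₁⟩ := hc₀.exists_union P fun f hf => by
    have := hspokes f hf
    simp only [Fintype.card_fin]
    omega
  have h₂ := card_seenIn_union_le G S P s(u, w)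
  obtain ⟨c₂, hc₂⟩ := hc₁.exists_insert (f := s(u, w))
    (by simp only [Fintype.card_fin]; omega)
  have h₃ := (card_seenIn_insert_le G (S ∪ P) s(u, w) s(v, w)).trans
    (add_le_add_left (card_seenIn_union_le G S P s(v, w)) 1)
  obtain ⟨c₃, hc₃⟩ := hc₂.exists_insert (f := s(v, w))
    (by simp only [Fintype.card_fin]; omega)
  have h₄ := (card_seenIn_insert_le G _ s(v, w) s(u, v)).trans <| add_le_add_left
    ((card_seenIn_insert_le G (S ∪ P) s(u, w) s(u, v)).trans
      (add_le_add_left (card_seenIn_union_le G S P s(u, v)) 1)) 1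
  obtain ⟨c₄, hc₄⟩ := hc₃.exists_insert (f := s(u, v))
    (by simp only [Fintype.card_fin]; omega)
  exact ⟨c₄, fun e he f hf => hc₄ e (mem_sides_or_spokes_or_edgesAvoiding huv huw hvw he) f
    (mem_sides_or_spokes_or_edgesAvoiding huv huw hvw hf)⟩

end Triangle

end SimpleGraph

theorem statement3 {V : Type*} [Fintype V] [DecidableEq V]
    (G : SimpleGraph V) [DecidableRel G.Adj]
    (hore : ∀ u v : V, G.Adj u v → G.degree u + G.degree v ≤ 7)
    (hG : ¬ G.HasStrongColoring 13)
    (hmin : ∀ H : G.Subgraph, H ≠ ⊤ → H.coe.HasStrongColoring 13) :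
    G.CliqueFree 3 := by
  have no_light_triangle : ∀ {u v w : V}, G.Adj u v → G.Adj u w → G.Adj v w →
      G.degree u + G.degree v ≤ 6 → False := fun huv huw hvw hdeg => by
    obtain ⟨c₀, hc₀⟩ := SimpleGraph.exists_isStrongEdgeColoringOn_edgesAvoiding
      (hmin _ (SimpleGraph.avoidingSubgraph_ne_top (mem_insert_self _ _) huv))
    exact hG (SimpleGraph.hasStrongColoring_of_triangle huv huw hvw hore hdeg hc₀)
  intro s hs
  obtain ⟨a, b, c, hab, hac, hbc, rfl⟩ := SimpleGraph.is3Clique_iff.1 hs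
  have := hore a b hab
  have := hore a c hac
  have := hore b c hbc
  by_cases hab' : G.degree a + G.degree b ≤ 6
  · exact no_light_triangle hab hac hbc hab'
  by_cases hac' : G.degree a + G.degree c ≤ 6
  · exact no_light_triangle hac hab hbc.symm hac'
  exact no_light_triangle hbc hab.symm hac.symm (by omega)
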